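/- arXiv:math/0004068 — 2 statements merged into one kernel-verified Lean document; each statement's English description precedes it below -/
import Mathlib

section
/- Let m ≥ 1 and δ ≥ 1 be integers. Let h : ℤ → ℤ be a function with h(j) = 0 for all j < 0. Define χ : ℤ → ℤ by χ(j) = h(j) if j > -3δ, and χ(j) = (-1)^(m-1) · h(-j - 3δ) if j ≤ -3δ. Assume that for every integer k, Σ_{i=0}^{m} (-1)^i · binomial(m, i) · χ(k - i) = 0. For k ∈ ℤ define Q_k = Σ_{i=0}^{m} (-1)^i · binomial(m, i) · h(k - i). Then Q_k = Q_{m - 3δ - k} for every integer k. -/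
open Finset

/-- Symmetry `Q_k = Q_{m - 3δ - k}` of the coefficients
`Q_k = Σ_{i=0}^{m} (-1)^i C(m,i) h(k-i)`, under the hypotheses that `h` vanishes on
negative integers, that `χ` is obtained from `h` by the Serre-duality rule
(`χ(j) = h(j)` for `j > -3δ`, `χ(j) = (-1)^(m-1) h(-j-3δ)` for `j ≤ -3δ`), and that
`Σ_{i=0}^{m} (-1)^i C(m,i) χ(k-i) = 0` for all `k`. -/
theorem statement3 (m δ : ℕ) (hm : 1 ≤ m) (hδ : 1 ≤ δ)
    (h : ℤ → ℤ) (hneg : ∀ j : ℤ, j < 0 → h j = 0)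
    (χ : ℤ → ℤ)
    (hχ₁ : ∀ j : ℤ, -3 * (δ : ℤ) < j → χ j = h j)
    (hχ₂ : ∀ j : ℤ, j ≤ -3 * (δ : ℤ) → χ j = (-1) ^ (m - 1) * h (-j - 3 * (δ : ℤ)))
    (hvan : ∀ k : ℤ,
      ∑ i ∈ Finset.range (m + 1), (-1) ^ i * (m.choose i : ℤ) * χ (k - (i : ℤ)) = 0) :
    ∀ k : ℤ,
      (∑ i ∈ Finset.range (m + 1), (-1) ^ i * (m.choose i : ℤ) * h (k - (i : ℤ))) =
      ∑ i ∈ Finset.range (m + 1), (-1) ^ i * (m.choose i : ℤ) *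
        h ((m : ℤ) - 3 * (δ : ℤ) - k - (i : ℤ)) := by
  intro k
  have key : ∀ j : ℤ, χ j = h j + (-1) ^ (m - 1) * h (-j - 3 * (δ : ℤ)) := by
    intro j
    rcases le_or_gt j (-3 * (δ : ℤ)) with hj | hj
    · rw [hχ₂ j hj, hneg j (by omega)]; ring
    · rw [hχ₁ j hj, hneg (-j - 3 * (δ : ℤ)) (by omega)]; ring
  have h0 := hvan k
  simp only [key] at h0
  have hsplit :
      (∑ i ∈ Finset.range (m + 1), (-1) ^ i * (m.choose i : ℤ) *
        (h (k - (i : ℤ)) + (-1) ^ (m - 1) * h (-(k - (i : ℤ)) - 3 * (δ : ℤ)))) =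
      (∑ i ∈ Finset.range (m + 1), (-1) ^ i * (m.choose i : ℤ) * h (k - (i : ℤ))) +
      (-1) ^ (m - 1) *
        ∑ i ∈ Finset.range (m + 1), (-1) ^ i * (m.choose i : ℤ) *
          h (-k - 3 * (δ : ℤ) + (i : ℤ)) := by
    rw [Finset.mul_sum, ← Finset.sum_add_distrib]
    refine Finset.sum_congr rfl fun i _ => ?_
    have : -(k - (i : ℤ)) - 3 * (δ : ℤ) = -k - 3 * (δ : ℤ) + (i : ℤ) := by ring
    rw [this]; ring
  rw [hsplit] at h0
  have hrefl :
      (∑ i ∈ Finset.range (m + 1), (-1) ^ i * (m.choose i : ℤ) *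
          h (-k - 3 * (δ : ℤ) + (i : ℤ))) =
      (-1) ^ m *
        ∑ i ∈ Finset.range (m + 1), (-1) ^ i * (m.choose i : ℤ) *
          h ((m : ℤ) - 3 * (δ : ℤ) - k - (i : ℤ)) := by
    rw [← Finset.sum_range_reflect (fun i => (-1 : ℤ) ^ i * (m.choose i : ℤ) *
      h (-k - 3 * (δ : ℤ) + (i : ℤ))) (m + 1), Finset.mul_sum]
    refine Finset.sum_congr rfl fun i hi => ?_
    have hi' : i ≤ m := by simpa [Nat.lt_succ_iff] using hi
    have h1 : m + 1 - 1 - i = m - i := by omega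
    have h2 : (((m - i : ℕ)) : ℤ) = (m : ℤ) - (i : ℤ) := by
      push_cast [Nat.cast_sub hi']; ring
    have h3 : m.choose (m - i) = m.choose i := Nat.choose_symm hi'
    have h4 : (-1 : ℤ) ^ (m - i) = (-1) ^ m * (-1) ^ i := by
      have e : (-1 : ℤ) ^ (m + i) = (-1) ^ (m - i) := by
        rw [show m + i = (m - i) + 2 * i by omega, pow_add, pow_mul]; norm_num
      rw [← e, pow_add]
    simp only [h1, h3, h2, h4]
    ring_nf
  rw [hrefl, ← mul_assoc] at h0
  have hsign : (-1 : ℤ) ^ (m - 1) * (-1) ^ m = -1 := by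
    rw [← pow_add, show m - 1 + m = 2 * (m - 1) + 1 by omega, pow_succ, pow_mul]
    norm_num
  rw [hsign] at h0
  linarith
end

section
/- Let m ≥ 1 and δ ≥ 1 be integers with m ≥ 3δ. Let h : ℤ → ℤ be a function with h(j) = 0 for all j < 0. Define χ : ℤ → ℤ by χ(j) = h(j) if j > -3δ, and χ(j) = (-1)^(m-1) · h(-j - 3δ) if j ≤ -3δ. Assume that for every integer k, Σ_{i=0}^{m} (-1)^i · binomial(m, i) · χ(k - i) = 0. For k ∈ ℤ define Q_k = Σ_{i=0}^{m} (-1)^i · binomial(m, i) · h(k - i). Then Q_k = 0 for every k < 0 and for every k > m - 3δ; and if moreover h(0) = 1, then Q_0 = Q_{m-3δ} = 1. -/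
open Finset

/-- Under the same hypotheses as the symmetry statement, together with `m ≥ 3δ`:
the coefficients `Q_k = Σ_{i=0}^{m} (-1)^i C(m,i) h(k-i)` vanish for `k < 0` and for
`k > m - 3δ`; and if moreover `h(0) = 1` then `Q_0 = Q_{m-3δ} = 1`. -/
theorem statement4 (m δ : ℕ) (hm : 1 ≤ m) (hδ : 1 ≤ δ) (hmδ : 3 * δ ≤ m)
    (h : ℤ → ℤ) (hneg : ∀ j : ℤ, j < 0 → h j = 0)
    (χ : ℤ → ℤ)
    (hχ₁ : ∀ j : ℤ, -3 * (δ : ℤ) < j → χ j = h j)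
    (hχ₂ : ∀ j : ℤ, j ≤ -3 * (δ : ℤ) → χ j = (-1) ^ (m - 1) * h (-j - 3 * (δ : ℤ)))
    (hvan : ∀ k : ℤ,
      ∑ i ∈ Finset.range (m + 1), (-1) ^ i * (m.choose i : ℤ) * χ (k - (i : ℤ)) = 0) :
    (∀ k : ℤ, (k < 0 ∨ (m : ℤ) - 3 * (δ : ℤ) < k) →
      ∑ i ∈ Finset.range (m + 1), (-1) ^ i * (m.choose i : ℤ) * h (k - (i : ℤ)) = 0) ∧
    (h 0 = 1 →
      (∑ i ∈ Finset.range (m + 1), (-1) ^ i * (m.choose i : ℤ) * h ((0 : ℤ) - (i : ℤ))) = 1 ∧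
      (∑ i ∈ Finset.range (m + 1), (-1) ^ i * (m.choose i : ℤ) *
        h (((m : ℤ) - 3 * (δ : ℤ)) - (i : ℤ))) = 1) := by
  constructor
  · intro k hk
    rcases hk with hk | hk
    · apply Finset.sum_eq_zero
      intro i _
      rw [hneg (k - i) (by omega), mul_zero]
    · rw [← hvan k]
      apply Finset.sum_congr rfl
      intro i hi
      simp only [Finset.mem_range] at hi
      rw [hχ₁ (k - i) (by omega)]
  · intro h0
    constructor
    · rw [Finset.sum_eq_single 0]
      · simpa using h0
      · intro i _ hi0
        rw [hneg (0 - (i : ℤ)) (by omega), mul_zero]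
      · simp
    · have hv := hvan ((m : ℤ) - 3 * δ)
      rw [Finset.sum_range_succ] at hv ⊢
      have e1 : ∀ i ∈ Finset.range m,
          (-1 : ℤ) ^ i * (m.choose i : ℤ) * χ ((m : ℤ) - 3 * δ - i) =
          (-1 : ℤ) ^ i * (m.choose i : ℤ) * h ((m : ℤ) - 3 * δ - i) := by
        intro i hi
        simp only [Finset.mem_range] at hi
        rw [hχ₁ _ (by omega)]
      rw [Finset.sum_congr rfl e1] at hv
      have e2 : χ ((m : ℤ) - 3 * δ - m) = (-1) ^ (m - 1) * h 0 := by
        rw [hχ₂ _ (by omega)]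
        congr 1
        ring_nf
      have e3 : h ((m : ℤ) - 3 * δ - m) = 0 := hneg _ (by omega)
      have e4 : ((-1 : ℤ)) ^ m * (-1) ^ (m - 1) = -1 := by
        rw [← pow_add]
        exact Odd.neg_one_pow ⟨m - 1, by omega⟩
      rw [e2] at hv
      rw [e3, mul_zero, add_zero]
      simp only [Nat.choose_self, Nat.cast_one, mul_one] at hv
      rw [h0, mul_one] at hv
      nlinarith [hv, e4]
end
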